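/- Under the assumptions of Theorem 1 (arbitrary positive weights, not necessarily summing to one), the closed-form expression Σ_{i,j=1}^M w_i^y w_j^y γ(‖y_i - y_j‖²) - 2 Σ_{i=1}^L Σ_{j=1}^M w_i^x w_j^y γ(‖x_i - y_j‖²) + Σ_{i,j=1}^L w_i^x w_j^x γ(‖x_i - x_j‖²) is nonnegative, since it equals the integral of a square: ∫_0^{b_max} b^{-(N-1)} ∫_{ℝ^N} (F̃(m,b) - F(m,b))² dm db ≥ 0. -/

import Mathlib

open MeasureTheory Real

/-- `negEi z` is the exponential integral `Ei(-z)`, defined for `z > 0` by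
`Ei(-z) = -∫_z^∞ (e^{-t}/t) dt`. -/
noncomputable def negEi (z : ℝ) : ℝ := -∫ t in Set.Ioi z, Real.exp (-t) / t

/-!
Integrating the product of two Gaussians over `m` gives `π^{N/2} b exp(-z/(4b²))` for the
weight `b^{-(N-1)}`, so for `z ≥ 0` one has `γ z = π^{N/2} ∫₀^{b_max} b exp(-z/(4b²)) db`:
with `t = z/(4b²)`, the function `z/8 · (e^{-t}/t + Ei(-t))` is a primitive of
`b exp(-z/(4b²))` that vanishes as `b → 0⁺`.

Merging the two mixtures into the weights `c = (w^y, -w^x)` at the points `p = (y, x)`, the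
expression becomes `∑ c_i c_j γ(‖p_i - p_j‖²)`, an integral over `b` of the quadratic forms
`∑ c_i c_j exp(-‖p_i - p_j‖²/(4b²))`. These are nonnegative because the Gaussian kernel is
positive definite: `exp(-‖u - v‖²/s) = e(u) e(v) exp(2⟨u, v⟩/s)`, and the entrywise
exponential of a Gram matrix is positive semidefinite, being a series of its Hadamard powers
(Schur product theorem).
-/

open Set Filter Topology Matrix Nat

namespace Matrix.PosSemidef

variable {ι : Type*} [Fintype ι] {A : Matrix ι ι ℝ}

theorem sum_mul_mul_nonneg (hA : A.PosSemidef) (c : ι → ℝ) :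
    0 ≤ ∑ i, ∑ j, c i * c j * A i j := by
  refine (hA.dotProduct_mulVec_nonneg c).trans_eq ?_
  simp only [dotProduct, mulVec, Pi.star_apply, star_trivial, Finset.mul_sum]
  exact Finset.sum_congr rfl fun i _ => Finset.sum_congr rfl fun j _ => by ring

theorem map_pow (hA : A.PosSemidef) (n : ℕ) : (A.map (· ^ n)).PosSemidef := by
  induction n with
  | zero =>
    have h : A.map (· ^ 0) = vecMulVec 1 (star 1) := by ext; simp [vecMulVec]
    rw [h]
    exact posSemidef_vecMulVec_self_star 1
  | succ n ih =>
    have h : A.map (· ^ (n + 1)) = A.map (· ^ n) ⊙ A := by ext; simp [pow_succ]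
    rw [h]
    exact ih.hadamard hA

theorem sum_mul_mul_exp_nonneg (hA : A.PosSemidef) (c : ι → ℝ) :
    0 ≤ ∑ i, ∑ j, c i * c j * exp (A i j) := by
  have hexp : ∀ x : ℝ, HasSum (fun n => x ^ n / n !) (exp x) := by
    rw [exp_eq_exp_ℝ]
    exact NormedSpace.expSeries_div_hasSum_exp
  refine HasSum.nonneg (fun n => ?_)
    (hasSum_sum fun i _ => hasSum_sum fun j _ => (hexp (A i j)).mul_left (c i * c j))
  have h := mul_nonneg (inv_nonneg.2 (Nat.cast_nonneg n !)) ((hA.map_pow n).sum_mul_mul_nonneg c)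
  simp only [Finset.mul_sum] at h
  refine h.trans_eq (Finset.sum_congr rfl fun i _ => Finset.sum_congr rfl fun j _ => ?_)
  simp only [map_apply]
  ring

end Matrix.PosSemidef

theorem sum_mul_mul_exp_neg_sum_sub_sq_div_nonneg {ι κ : Type*} [Fintype ι] [Fintype κ]
    (d : ι → ℝ) (u : ι → κ → ℝ) {s : ℝ} (hs : 0 ≤ s) :
    0 ≤ ∑ i, ∑ j, d i * d j * exp (-(∑ k, (u i k - u j k) ^ 2) / s) := by
  have hG : ((2 / s) • (of u * (of u)ᴴ)).PosSemidef :=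
    (posSemidef_self_mul_conjTranspose _).smul (by positivity)
  refine (hG.sum_mul_mul_exp_nonneg fun i => d i * exp (-(∑ k, u i k ^ 2) / s)).trans_eq
    (Finset.sum_congr rfl fun i _ => Finset.sum_congr rfl fun j _ => ?_)
  have hsq : ∑ k, (u i k - u j k) ^ 2
      = ∑ k, u i k ^ 2 + ∑ k, u j k ^ 2 - 2 * ∑ k, u i k * u j k := by
    simp only [Finset.mul_sum, ← Finset.sum_add_distrib, ← Finset.sum_sub_distrib]
    exact Finset.sum_congr rfl fun k _ => by ring
  simp only [Matrix.smul_apply, mul_apply, conjTranspose_apply, of_apply, star_trivial,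
    smul_eq_mul, hsq]
  rw [mul_mul_mul_comm, ← exp_add, mul_assoc, ← exp_add]
  congr 2
  ring

theorem sum_mul_mul_integral_nonneg {ι : Type*} [Fintype ι] {a b : ℝ} (hab : a ≤ b)
    (c : ι → ℝ) (f : ι → ι → ℝ → ℝ) (hf : ∀ i j, IntervalIntegrable (f i j) volume a b)
    (hpos : ∀ t ∈ Icc a b, 0 ≤ ∑ i, ∑ j, c i * c j * f i j t) :
    0 ≤ ∑ i, ∑ j, c i * c j * ∫ t in a..b, f i j t := by
  have hfc : ∀ i j, IntervalIntegrable (fun t => c i * c j * f i j t) volume a b :=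
    fun i j => (hf i j).const_mul _
  calc 0 ≤ ∫ t in a..b, ∑ i, ∑ j, c i * c j * f i j t := intervalIntegral.integral_nonneg hab hpos
    _ = ∑ i, ∫ t in a..b, ∑ j, c i * c j * f i j t :=
      intervalIntegral.integral_finsetSum fun i _ => by
        simpa only [Finset.sum_fn] using IntervalIntegrable.sum _ fun j _ => hfc i j
    _ = ∑ i, ∑ j, c i * c j * ∫ t in a..b, f i j t := by
      simp only [intervalIntegral.integral_finsetSum fun j _ => hfc _ j,
        intervalIntegral.integral_const_mul]

theorem sum_elim_neg_quadratic_eq {α ι κ : Type*} [Fintype ι] [Fintype κ] (K : α → α → ℝ)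
    (hK : ∀ u v, K u v = K v u) (a : ι → ℝ) (y : ι → α) (b : κ → ℝ) (x : κ → α) :
    ∑ i, ∑ j, a i * a j * K (y i) (y j) - 2 * ∑ i, ∑ j, b i * a j * K (x i) (y j)
        + ∑ i, ∑ j, b i * b j * K (x i) (x j)
      = ∑ i, ∑ j, Sum.elim a (-b) i * Sum.elim a (-b) j * K (Sum.elim y x i) (Sum.elim y x j) := by
  have hcross : ∑ i, ∑ j, a i * b j * K (y i) (x j) = ∑ i, ∑ j, b i * a j * K (x i) (y j) := by
    rw [Finset.sum_comm]
    exact Finset.sum_congr rfl fun i _ => Finset.sum_congr rfl fun j _ => by rw [hK]; ring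
  simp only [Fintype.sum_sum_type, Sum.elim_inl, Sum.elim_inr, Pi.neg_apply,
    Finset.sum_add_distrib, neg_mul, mul_neg, Finset.sum_neg_distrib, hcross]
  ring

theorem continuousOn_exp_neg_div : ContinuousOn (fun s => exp (-s) / s) (Ioi 0) :=
  (continuous_exp.comp continuous_neg).continuousOn.div continuousOn_id fun _ hs => ne_of_gt hs

theorem integrableOn_exp_neg_div_Ioi {t : ℝ} (ht : 0 < t) :
    IntegrableOn (fun s => exp (-s) / s) (Ioi t) := by
  refine ((integrableOn_exp_neg_Ioi t).div_const t).mono'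
    ((continuousOn_exp_neg_div.mono fun _ hs => ht.trans hs).aestronglyMeasurable
      measurableSet_Ioi) ((ae_restrict_iff' measurableSet_Ioi).2 (ae_of_all _ fun s hs => ?_))
  rw [norm_div, norm_of_nonneg (exp_pos _).le, norm_of_nonneg (ht.trans hs).le]
  exact div_le_div_of_nonneg_left (exp_pos _).le ht hs.le

theorem negEi_nonpos {t : ℝ} (ht : 0 < t) : negEi t ≤ 0 :=
  neg_nonpos.2 <| setIntegral_nonneg measurableSet_Ioi fun _ hs =>
    div_nonneg (exp_pos _).le (ht.trans hs).le

theorem neg_negEi_le {t : ℝ} (ht : 0 < t) : -negEi t ≤ exp (-t) / t := by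
  rw [negEi, neg_neg, ← integral_exp_neg_Ioi, ← integral_div]
  refine setIntegral_mono_on (integrableOn_exp_neg_div_Ioi ht)
    ((integrableOn_exp_neg_Ioi t).div_const t) measurableSet_Ioi fun s hs => ?_
  exact div_le_div_of_nonneg_left (exp_pos _).le ht hs.le

theorem hasDerivAt_negEi {t : ℝ} (ht : 0 < t) : HasDerivAt negEi (exp (-t) / t) t := by
  have ha : 0 < t / 2 := half_pos ht
  have hprim : HasDerivAt (fun s => ∫ u in t / 2..s, exp (-u) / u) (exp (-t) / t) t :=
    intervalIntegral.integral_hasDerivAt_right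
      (continuousOn_exp_neg_div.mono fun u hu =>
        lt_of_lt_of_le (lt_min ha ht) hu.1).intervalIntegrable
      (continuousOn_exp_neg_div.stronglyMeasurableAtFilter isOpen_Ioi t ht)
      (continuousOn_exp_neg_div.continuousAt (Ioi_mem_nhds ht))
  refine (hprim.sub_const (∫ u in Ioi (t / 2), exp (-u) / u)).congr_of_eventuallyEq ?_
  filter_upwards [Ioi_mem_nhds (half_lt_self ht)] with s hs
  rw [negEi, ← intervalIntegral.integral_interval_add_Ioi (integrableOn_exp_neg_div_Ioi ha)
    (integrableOn_exp_neg_div_Ioi (ha.trans hs))]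
  ring

theorem hasDerivAt_exp_neg_div_add_negEi {t : ℝ} (ht : 0 < t) :
    HasDerivAt (fun s => exp (-s) / s + negEi s) (-(exp (-t) / t ^ 2)) t := by
  refine (((hasDerivAt_neg t).exp.div (hasDerivAt_id' t) ht.ne').add
    (hasDerivAt_negEi ht)).congr_deriv ?_
  field_simp
  ring

theorem tendsto_exp_neg_div_add_negEi_atTop :
    Tendsto (fun s => exp (-s) / s + negEi s) atTop (𝓝 0) := by
  refine tendsto_of_tendsto_of_tendsto_of_le_of_le' tendsto_const_nhds
    (tendsto_exp_neg_atTop_nhds_zero.div_atTop tendsto_id :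
      Tendsto (fun s => exp (-s) / s) atTop (𝓝 0)) ?_ ?_
  · filter_upwards [eventually_gt_atTop 0] with s hs
    linarith [neg_negEi_le hs]
  · filter_upwards [eventually_gt_atTop 0] with s hs
    linarith [negEi_nonpos hs]

theorem intervalIntegrable_mul_exp_neg_div_sq {z : ℝ} (hz : 0 ≤ z) (a b : ℝ) :
    IntervalIntegrable (fun s => s * exp (-z / (4 * s ^ 2))) volume a b := by
  refine (continuous_norm.intervalIntegrable a b).mono_fun' (by fun_prop)
    (ae_of_all _ fun s => ?_)
  dsimp only
  rw [norm_mul, norm_of_nonneg (exp_pos _).le]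
  refine mul_le_of_le_one_right (norm_nonneg s) (exp_le_one_iff.2 ?_)
  rw [neg_div]
  exact neg_nonpos.2 (by positivity)

theorem tendsto_div_four_mul_sq_nhdsGT_zero {z : ℝ} (hz : 0 < z) :
    Tendsto (fun s : ℝ => z / (4 * s ^ 2)) (𝓝[>] 0) atTop := by
  have h4 : Tendsto (fun s : ℝ => 4 * s ^ 2) (𝓝[>] 0) (𝓝[>] 0) := by
    refine tendsto_nhdsWithin_iff.2 ⟨?_, ?_⟩
    · exact ((by fun_prop : Continuous fun s : ℝ => 4 * s ^ 2).tendsto' 0 0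
        (by simp)).mono_left nhdsWithin_le_nhds
    · filter_upwards [self_mem_nhdsWithin] with s (hs : 0 < s)
      exact mem_Ioi.2 (by positivity)
  exact (h4.inv_tendsto_nhdsGT_zero.const_mul_atTop hz).congr fun s => (div_eq_mul_inv _ _).symm

theorem integral_mul_exp_neg_div_sq {z b : ℝ} (hz : 0 < z) (hb : 0 < b) :
    ∫ s in 0..b, s * exp (-z / (4 * s ^ 2))
      = z / 8 * (exp (-(z / (4 * b ^ 2))) / (z / (4 * b ^ 2)) + negEi (z / (4 * b ^ 2))) := by
  set F := fun s : ℝ => z / 8 * (exp (-(z / (4 * s ^ 2))) / (z / (4 * s ^ 2))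
    + negEi (z / (4 * s ^ 2)))
  have hF : ∀ s, 0 < s → HasDerivAt F (s * exp (-z / (4 * s ^ 2))) s := by
    intro s hs
    have ht : HasDerivAt (fun s : ℝ => z / (4 * s ^ 2)) (-z / (2 * s ^ 3)) s := by
      refine ((hasDerivAt_const s z).div ((hasDerivAt_pow 2 s).const_mul 4)
        (by positivity)).congr_deriv ?_
      field_simp
      ring
    refine (((hasDerivAt_exp_neg_div_add_negEi (by positivity)).comp s ht).const_mul
      (z / 8)).congr_deriv ?_
    rw [neg_div]
    field_simp
    ring
  have h0 : Tendsto F (𝓝[>] 0) (𝓝 0) := by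
    simpa using (tendsto_exp_neg_div_add_negEi_atTop.comp
      (tendsto_div_four_mul_sq_nhdsGT_zero hz)).const_mul (z / 8)
  rw [intervalIntegral.integral_eq_sub_of_hasDerivAt_of_tendsto hb (fun s hs => hF s hs.1)
    (intervalIntegrable_mul_exp_neg_div_sq hz.le 0 b) h0
    ((hF b hb).continuousAt.tendsto.mono_left nhdsWithin_le_nhds), sub_zero]

theorem closed_form_distance_nonneg_general
    (N M L : ℕ)
    (y : Fin M → Fin N → ℝ) (wy : Fin M → ℝ)
    (x : Fin L → Fin N → ℝ) (wx : Fin L → ℝ)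
    (bmax : ℝ) (hb : 0 < bmax)
    (γ : ℝ → ℝ)
    (hγ : ∀ z, γ z = if z = 0 then Real.pi ^ ((N : ℝ) / 2) / 2 * bmax ^ 2
        else Real.pi ^ ((N : ℝ) / 2) / 8 *
          (4 * bmax ^ 2 * Real.exp (-z / (4 * bmax ^ 2))
            + z * negEi (z / (4 * bmax ^ 2)))) :
    0 ≤ ∑ i, ∑ j, wy i * wy j * γ (∑ k, (y i k - y j k) ^ 2)
        - 2 * ∑ i, ∑ j, wx i * wy j * γ (∑ k, (x i k - y j k) ^ 2)
        + ∑ i, ∑ j, wx i * wx j * γ (∑ k, (x i k - x j k) ^ 2) := by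
  set C := π ^ ((N : ℝ) / 2)
  have hrep : ∀ u v : Fin N → ℝ, γ (∑ k, (u k - v k) ^ 2)
      = ∫ s in 0..bmax, C * (s * exp (-(∑ k, (u k - v k) ^ 2) / (4 * s ^ 2))) := by
    intro u v
    rw [hγ, intervalIntegral.integral_const_mul]
    rcases (by positivity : 0 ≤ ∑ k, (u k - v k) ^ 2).eq_or_lt with hz | hz
    · simp only [← hz, ↓reduceIte, neg_zero, zero_div, exp_zero, mul_one, integral_id,
        ne_eq, OfNat.ofNat_ne_zero, not_false_eq_true, zero_pow, sub_zero]
      ring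
    · rw [if_neg hz.ne', integral_mul_exp_neg_div_sq hz hb, neg_div]
      field_simp
  rw [sum_elim_neg_quadratic_eq (fun u v : Fin N → ℝ => γ (∑ k, (u k - v k) ^ 2))
    (fun u v => by simp only [← neg_sub (u _), neg_sq]) wy y wx x]
  simp only [hrep]
  refine sum_mul_mul_integral_nonneg hb.le _ _
    (fun i j => (intervalIntegrable_mul_exp_neg_div_sq (by positivity) 0 bmax).const_mul C)
    fun t ht => ?_
  have h := mul_nonneg (mul_nonneg (by positivity : 0 ≤ C) ht.1)
    (sum_mul_mul_exp_neg_sum_sub_sq_div_nonneg (Sum.elim wy (-wx)) (Sum.elim y x)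
      (by positivity : 0 ≤ 4 * t ^ 2))
  simp only [Finset.mul_sum] at h
  exact h.trans_eq (Finset.sum_congr rfl fun i _ => Finset.sum_congr rfl fun j _ => by ring)

theorem closed_form_distance_nonneg
    (N M L : ℕ) (hN : 1 ≤ N)
    (y : Fin M → Fin N → ℝ) (wy : Fin M → ℝ) (hwy : ∀ i, 0 < wy i)
    (x : Fin L → Fin N → ℝ) (wx : Fin L → ℝ) (hwx : ∀ i, 0 < wx i)
    (bmax : ℝ) (hb : 0 < bmax)
    (γ : ℝ → ℝ)
    (hγ : ∀ z, γ z = if z = 0 then Real.pi ^ ((N : ℝ) / 2) / 2 * bmax ^ 2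
        else Real.pi ^ ((N : ℝ) / 2) / 8 *
          (4 * bmax ^ 2 * Real.exp (-z / (4 * bmax ^ 2))
            + z * negEi (z / (4 * bmax ^ 2)))) :
    0 ≤ ∑ i, ∑ j, wy i * wy j * γ (∑ k, (y i k - y j k) ^ 2)
        - 2 * ∑ i, ∑ j, wx i * wy j * γ (∑ k, (x i k - y j k) ^ 2)
        + ∑ i, ∑ j, wx i * wx j * γ (∑ k, (x i k - x j k) ^ 2) :=
  closed_form_distance_nonneg_general N M L y wy x wx bmax hb γ hγ
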